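/- arXiv:2108.09482 — 4 statements merged into one kernel-verified Lean document; each statement's English description precedes it below -/
import Mathlib

section
/- Let p, q be positive coprime integers with p even, and let κ ∈ ℝ. Define μ(m,n) = n² + κ/π − (q m / p)² for m ∈ ℕ odd and n ∈ ℕ⁺. Then |μ(m,n)| → ∞ as max(m,n) → ∞, i.e., for every C > 0 there are only finitely many pairs (m, n) with m odd and |μ(m,n)| ≤ C. -/
/-- For `p, q` positive coprime with `p` even and any `κ ∈ ℝ`, the quantities
`μ(m,n) = n² + κ/π − (qm/p)²` (with `m` odd, `n ≥ 1`) satisfy `|μ(m,n)| → ∞`: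
for every `C > 0` only finitely many pairs `(m,n)` have `|μ(m,n)| ≤ C`. -/
theorem mu_tendsto_infinity (p q : ℕ) (hp : 0 < p) (hq : 0 < q)
    (hcop : Nat.Coprime p q) (hpe : Even p) (κ : ℝ) (μ : ℕ → ℕ → ℝ)
    (hμ : ∀ m n : ℕ, μ m n = (n : ℝ)^2 + κ / Real.pi - ((q : ℝ) * m / p)^2) :
    ∀ C : ℝ, 0 < C →
      {mn : ℕ × ℕ | Odd mn.1 ∧ 0 < mn.2 ∧ |μ mn.1 mn.2| ≤ C}.Finite := by
  intro C hC
  -- q is odd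
  have hqo : Odd q := by
    rcases Nat.even_or_odd q with hqe | hqo
    · exfalso
      have h2 : 2 ∣ Nat.gcd p q := Nat.dvd_gcd hpe.two_dvd hqe.two_dvd
      rw [hcop] at h2
      omega
    · exact hqo
  set B : ℝ := (p : ℝ)^2 * (C + |κ| / Real.pi) with hB
  set N : ℕ := ⌈B⌉₊ with hN
  have hsub : {mn : ℕ × ℕ | Odd mn.1 ∧ 0 < mn.2 ∧ |μ mn.1 mn.2| ≤ C} ⊆
      Set.Iic N ×ˢ Set.Iic N := by
    rintro ⟨m, n⟩ ⟨hm, hn, habs⟩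
    simp only [Set.mem_setOf_eq] at hm hn habs
    -- the integer numerator
    set k : ℤ := ((n : ℤ) * p)^2 - ((m : ℤ) * q)^2 with hk
    have hpR : (p : ℝ) ≠ 0 := by positivity
    have hkcastR : (k : ℝ) = (n : ℝ)^2 * (p : ℝ)^2 - (m : ℝ)^2 * (q : ℝ)^2 := by
      rw [hk]; push_cast; ring
    have hμk : μ m n = (k : ℤ) / (p : ℝ)^2 + κ / Real.pi := by
      rw [hμ m n, hkcastR]
      field_simp
      ring
    have hodd : Odd ((n : ℤ) * p - (m : ℤ) * q) := by
      rcases hpe with ⟨t, ht⟩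
      rcases hqo with ⟨s, hs⟩
      rcases hm with ⟨r, hr⟩
      refine ⟨(n : ℤ) * t - (2 * r * s + r + s + 1), ?_⟩
      subst ht hs hr
      push_cast
      ring
    have hne : (n : ℤ) * p - (m : ℤ) * q ≠ 0 := by
      rcases hodd with ⟨r, hr⟩
      omega
    have hab1 : (1 : ℤ) ≤ |(n : ℤ) * p - (m : ℤ) * q| := Int.one_le_abs hne
    have hsumnn : (0 : ℤ) ≤ (n : ℤ) * p + (m : ℤ) * q :=
      add_nonneg (mul_nonneg (Int.natCast_nonneg n) (Int.natCast_nonneg p))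
        (mul_nonneg (Int.natCast_nonneg m) (Int.natCast_nonneg q))
    have hfac : |k| = |(n : ℤ) * p - (m : ℤ) * q| * ((n : ℤ) * p + (m : ℤ) * q) := by
      have hprod : k = ((n : ℤ) * p - (m : ℤ) * q) * ((n : ℤ) * p + (m : ℤ) * q) := by
        rw [hk]; ring
      rw [hprod, abs_mul, abs_of_nonneg hsumnn]
    have hsum : (n : ℤ) * p + (m : ℤ) * q ≤ |k| := by
      rw [hfac]
      nlinarith [abs_nonneg ((n : ℤ) * p - (m : ℤ) * q), hsumnn]
    have hmn : (m : ℤ) ≤ |k| ∧ (n : ℤ) ≤ |k| := by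
      constructor <;> nlinarith [hsum, (by exact_mod_cast hp : (1 : ℤ) ≤ (p : ℤ)),
        (by exact_mod_cast hq : (1 : ℤ) ≤ (q : ℤ))]
    -- real bound on |k|
    have hpi : 0 < Real.pi := Real.pi_pos
    have hkR : |(k : ℝ)| / (p : ℝ)^2 ≤ C + |κ| / Real.pi := by
      have h1 : (k : ℝ) / (p : ℝ)^2 = μ m n - κ / Real.pi := by rw [hμk]; ring
      have h2 : |(k : ℝ) / (p : ℝ)^2| ≤ |μ m n| + |κ / Real.pi| := by
        rw [h1]; exact abs_sub _ _
      have h3 : |κ / Real.pi| = |κ| / Real.pi := by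
        rw [abs_div, abs_of_pos hpi]
      rw [abs_div, abs_of_nonneg (by positivity : (0:ℝ) ≤ (p:ℝ)^2)] at h2
      linarith [h2, habs, h3.le, h3.ge]
    have hkB : |(k : ℝ)| ≤ B := by
      rw [hB]
      have hp2 : (0 : ℝ) < (p : ℝ)^2 := by positivity
      calc |(k : ℝ)| = |(k : ℝ)| / (p : ℝ)^2 * (p : ℝ)^2 := by field_simp
        _ ≤ (C + |κ| / Real.pi) * (p : ℝ)^2 := by
            apply mul_le_mul_of_nonneg_right hkR hp2.le
        _ = (p : ℝ)^2 * (C + |κ| / Real.pi) := by ring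
    have hkcast : |(k : ℝ)| = ((|k| : ℤ) : ℝ) := by push_cast; ring
    constructor
    · show m ≤ N
      have : (m : ℝ) ≤ B := by
        rw [hkcast] at hkB
        calc (m : ℝ) ≤ ((|k| : ℤ) : ℝ) := by exact_mod_cast hmn.1
          _ ≤ B := hkB
      exact Nat.le_ceil B |> fun h => by
        exact_mod_cast (this.trans h)
    · show n ≤ N
      have : (n : ℝ) ≤ B := by
        rw [hkcast] at hkB
        calc (n : ℝ) ≤ ((|k| : ℤ) : ℝ) := by exact_mod_cast hmn.2
          _ ≤ B := hkB
      exact Nat.le_ceil B |> fun h => by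
        exact_mod_cast (this.trans h)
  exact Set.Finite.subset ((Set.finite_Iic N).prod (Set.finite_Iic N)) hsub
end

section
/- Let f: ℝ × [0,π] × ℝ → ℝ be T-periodic in t. The Nemytskii operator F(y)(t,x) = f(t,x,y(t,x)) maps M_o into M_o if f = f₁ + f₂ where f₁(t,x,y) = f₁(t+T/2,x,y) and f₁ is odd in y, and f₂(t,x,y) = −f₂(t+T/2,x,y) and f₂ is even in y. Conversely, if F(M_o) ⊆ M_o for all measurable y ∈ M_o, then f decomposes in this way. -/
/-- The Nemytskii operator `F(y)(t,x) = f(t,x,y(t,x))` maps the antiperiodic class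
`M_o = {y : y(t+T/2,x) = −y(t,x)}` into itself if and only if `f = f₁ + f₂` with
`f₁` half-period periodic and odd in `y` and `f₂` half-period antiperiodic and even in `y`. -/
theorem nemytskii_maps_Mo_iff (T : ℝ) (hT : 0 < T) (f : ℝ → ℝ → ℝ → ℝ)
    (hper : ∀ t x y, f (t + T) x y = f t x y) :
    (∃ f₁ f₂ : ℝ → ℝ → ℝ → ℝ,
        (∀ t x y, f₁ (t + T / 2) x y = f₁ t x y) ∧
        (∀ t x y, f₁ t x (-y) = - f₁ t x y) ∧
        (∀ t x y, f₂ (t + T / 2) x y = - f₂ t x y) ∧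
        (∀ t x y, f₂ t x (-y) = f₂ t x y) ∧
        (∀ t x y, f t x y = f₁ t x y + f₂ t x y)) ↔
    (∀ y : ℝ → ℝ → ℝ, (∀ t x, y (t + T / 2) x = - y t x) →
        ∀ t x, f (t + T / 2) x (y (t + T / 2) x) = - f t x (y t x)) := by
  constructor
  · rintro ⟨f₁, f₂, h1p, h1o, h2a, h2e, hsum⟩ y hy t x
    rw [hy t x, hsum, hsum, h1p, h2a, h1o, h2e]
    ring
  · intro h
    -- key identity: f(t+T/2, x, -z) = - f(t, x, z)
    have K : ∀ t x z, f (t + T / 2) x (-z) = - f t x z := by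
      intro t x z
      have hy : ∀ s u : ℝ,
          (fun (s : ℝ) (_ : ℝ) => z * Real.cos ((s - t) * (2 * Real.pi / T)))
            (s + T / 2) u
          = - (fun (s : ℝ) (_ : ℝ) => z * Real.cos ((s - t) * (2 * Real.pi / T))) s u := by
        intro s u
        have harg : (s + T / 2 - t) * (2 * Real.pi / T)
            = (s - t) * (2 * Real.pi / T) + Real.pi := by
          field_simp
          ring
        simp only [harg, Real.cos_add_pi]
        ring
      have := h (fun (s : ℝ) (_ : ℝ) => z * Real.cos ((s - t) * (2 * Real.pi / T))) hy t x
      have e1 : (t + T / 2 - t) * (2 * Real.pi / T) = Real.pi := by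
        field_simp; ring
      have e0 : (t - t) * (2 * Real.pi / T) = 0 := by ring
      simp only [e1, e0, Real.cos_pi, Real.cos_zero, mul_one, mul_neg_one] at this
      exact this
    refine ⟨fun t x y => (f t x y - f t x (-y)) / 2,
            fun t x y => (f t x y + f t x (-y)) / 2, ?_, ?_, ?_, ?_, ?_⟩
    · intro t x y
      have h1 := K t x (-y)
      have h2 := K t x y
      simp only [neg_neg] at h1
      simp only []
      rw [h1, h2]; ring
    · intro t x y; simp only [neg_neg]; ring
    · intro t x y
      have h1 := K t x (-y)
      have h2 := K t x y
      simp only [neg_neg] at h1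
      simp only []
      rw [h1, h2]; ring
    · intro t x y; simp only [neg_neg]; ring
    · intro t x y; ring
end

section
/- Suppose H is a Hilbert space, L self-adjoint on H with orthonormal eigenbasis and eigenvalues forming a discrete set with all eigenspaces for eigenvalues in any bounded interval finite-dimensional. Let λ̲ < λ̄ be consecutive eigenvalues and γ: Ω → ℝ a multiplication operator (by a bounded measurable function) with λ̲ < γ(t,x) < λ̄ a.e. and essinf γ > λ̲, esssup γ < λ̄. Then there exists δ > 0 with ‖Ly − γy‖ ≥ δ‖y‖ for all y ∈ D(L). -/
open MeasureTheory
open scoped RealInnerProductSpace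

open scoped ENNReal

lemma lp_norm_mul_le {ι : Type*} (f g : lp (fun _ : ι => ℝ) 2) (d : ℝ) (hd : 0 ≤ d)
    (h : ∀ i, d * ‖g i‖ ≤ ‖f i‖) : d * ‖g‖ ≤ ‖f‖ := by
  have hp : (0:ℝ) < (2:ℝ≥0∞).toReal := by norm_num
  have hf := lp.norm_rpow_eq_tsum hp f
  have hg := lp.norm_rpow_eq_tsum hp g
  have hsumf := (lp.memℓp f).summable hp
  have hsumg := (lp.memℓp g).summable hp
  have key : (d * ‖g‖) ^ (2:ℝ≥0∞).toReal ≤ ‖f‖ ^ (2:ℝ≥0∞).toReal := by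
    rw [Real.mul_rpow hd (norm_nonneg _), hf, hg, ← tsum_mul_left]
    refine Summable.tsum_le_tsum (fun i => ?_) (hsumg.mul_left _) hsumf
    rw [← Real.mul_rpow hd (norm_nonneg _)]
    exact Real.rpow_le_rpow (by positivity) (h i) (by norm_num)
  exact (Real.rpow_le_rpow_iff (by positivity) (norm_nonneg _) hp).1 key

/-- Let `L` be a symmetric operator on `H = L²(Ω, μ)` with an orthonormal eigenbasis
whose eigenvalues meet every bounded interval in a finite set, and let `λ̲ < λ̄` be
consecutive eigenvalues. If `γ ∈ L^∞` is a multiplication coefficient with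
`λ̲ < essinf γ` and `esssup γ < λ̄`, then there exists `δ > 0` with
`‖Ly − γy‖ ≥ δ‖y‖` for all `y ∈ D(L)`. -/
theorem multiplication_nonresonance {Ω : Type*} [MeasurableSpace Ω] (μ : Measure Ω)
    {ι : Type*}
    (D : Submodule ℝ (Lp ℝ 2 μ)) (L : D →ₗ[ℝ] Lp ℝ 2 μ)
    (hsym : ∀ x y : D, ⟪L x, ((y : Lp ℝ 2 μ))⟫ = ⟪((x : Lp ℝ 2 μ)), L y⟫)
    (e : HilbertBasis ι ℝ (Lp ℝ 2 μ)) (c : ι → ℝ)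
    (heD : ∀ i, (e i : Lp ℝ 2 μ) ∈ D)
    (heig : ∀ i, L ⟨e i, heD i⟩ = c i • (e i : Lp ℝ 2 μ))
    (hfin : ∀ A B : ℝ, {i : ι | c i ∈ Set.Icc A B}.Finite)
    (lam1 lam2 : ℝ) (hlt : lam1 < lam2)
    (h1 : ∃ i, c i = lam1) (h2 : ∃ i, c i = lam2)
    (hcons : ∀ i, c i ≤ lam1 ∨ lam2 ≤ c i)
    (γ : Ω → ℝ) (hγmeas : Measurable γ) (a b : ℝ) (ha : lam1 < a) (hb : b < lam2)
    (hγ : ∀ᵐ z ∂μ, a ≤ γ z ∧ γ z ≤ b) :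
    ∃ δ : ℝ, 0 < δ ∧ ∀ y : D, ∀ gy : Lp ℝ 2 μ,
      (∀ᵐ z ∂μ, (gy : Ω → ℝ) z = γ z * ((y : Lp ℝ 2 μ) : Ω → ℝ) z) →
      δ * ‖(y : Lp ℝ 2 μ)‖ ≤ ‖L y - gy‖ := by
  by_cases hab : a ≤ b
  case neg =>
    -- degenerate case: the measure is zero
    have hμ : μ = 0 := by
      rw [ae_iff] at hγ
      have huniv : {z | ¬(a ≤ γ z ∧ γ z ≤ b)} = Set.univ := by
        ext z; simp only [Set.mem_setOf_eq, Set.mem_univ, iff_true]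
        rintro ⟨h1, h2⟩; exact hab (h1.trans h2)
      rw [huniv] at hγ
      exact Measure.measure_univ_eq_zero.1 hγ
    refine ⟨1, one_pos, fun y gy _ => ?_⟩
    have : ‖(y : Lp ℝ 2 μ)‖ = 0 := by
      subst hμ; simp [Lp.norm_def]
    rw [this, mul_zero]
    exact norm_nonneg _
  case pos =>
    set m : ℝ := (a + b) / 2 with hm
    set r : ℝ := (b - a) / 2 with hr
    set d : ℝ := min (m - lam1) (lam2 - m) with hd
    have hr0 : 0 ≤ r := by simp [hr]; linarith
    have hrd : r < d := by
      apply lt_min <;> [skip; skip] <;> simp [hm, hr] <;> linarith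
    have hd0 : 0 ≤ d := hr0.trans hrd.le
    refine ⟨d - r, by linarith, fun y gy hy => ?_⟩
    set g : Lp ℝ 2 μ := (y : Lp ℝ 2 μ) with hg
    set f : Lp ℝ 2 μ := L y - m • g with hf
    -- Step 1: d * ‖g‖ ≤ ‖f‖
    have hcoord : ∀ i, e.repr f i = (c i - m) * e.repr g i := by
      intro i
      rw [e.repr_apply_apply, e.repr_apply_apply, hf]
      have h1 : ⟪(e i : Lp ℝ 2 μ), L y⟫ = c i * ⟪(e i : Lp ℝ 2 μ), g⟫ := by
        rw [← hsym ⟨e i, heD i⟩ y, heig i, real_inner_smul_left]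
      rw [inner_sub_right, real_inner_smul_right, h1]; ring
    have hstep1 : d * ‖g‖ ≤ ‖f‖ := by
      have := lp_norm_mul_le (e.repr f) (e.repr g) d hd0 (fun i => by
        rw [hcoord i, norm_mul]
        have : d ≤ ‖c i - m‖ := by
          rcases hcons i with h | h
          · calc d ≤ m - lam1 := min_le_left _ _
              _ ≤ m - c i := by linarith
              _ ≤ |c i - m| := by rw [abs_sub_comm]; exact le_abs_self _
          · calc d ≤ lam2 - m := min_le_right _ _
              _ ≤ c i - m := by linarith
              _ ≤ |c i - m| := le_abs_self _
        exact mul_le_mul_of_nonneg_right this (norm_nonneg _))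
      simpa using this
    -- Step 2: ‖gy - m • g‖ ≤ r * ‖g‖
    have hstep2 : ‖gy - m • g‖ ≤ r * ‖g‖ := by
      apply Lp.norm_le_mul_norm_of_ae_le_mul
      filter_upwards [hy, hγ, Lp.coeFn_sub gy (m • g), Lp.coeFn_smul m g] with z hz hz2 hz3 hz4
      rw [hz3]
      simp only [Pi.sub_apply]
      rw [hz4, hz]
      simp only [Pi.smul_apply, smul_eq_mul]
      rw [← sub_mul, Real.norm_eq_abs, Real.norm_eq_abs, abs_mul]
      apply mul_le_mul_of_nonneg_right _ (abs_nonneg _)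
      rw [abs_le]
      constructor <;> simp [hm, hr] <;> linarith [hz2.1, hz2.2]
    -- conclude
    have hkey : L y - gy = f - (gy - m • g) := by rw [hf]; abel
    calc (d - r) * ‖g‖ = d * ‖g‖ - r * ‖g‖ := by ring
      _ ≤ ‖f‖ - ‖gy - m • g‖ := by
          exact sub_le_sub hstep1 hstep2
      _ ≤ ‖f - (gy - m • g)‖ := norm_sub_norm_le _ _
      _ = ‖L y - gy‖ := by rw [hkey]
end

section
/- Let λ_n² = n² + κ/π + O(1/n²) and T = 2π p/q with p even, q odd coprime to p. Then the eigenvalues μ_{mn} = λ_n² − (qm/p)² with m odd satisfy: for every bounded interval I ⊂ ℝ, the set {(m,n) : m odd, μ_{mn} ∈ I} is finite. -/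
/-- With Sturm–Liouville asymptotics `λₙ² = n² + κ/π + r(n)`, `|r(n)| ≤ C/n²`, and
`T = 2πp/q` with `p` even, `q` odd coprime to `p`, the eigenvalues
`μ_{mn} = λₙ² − (qm/p)²` with `m` odd meet every bounded interval only finitely often. -/
theorem eigenvalues_finite_in_bounded_interval (p q : ℕ) (hp : 0 < p) (hq : 0 < q)
    (hcop : Nat.Coprime p q) (hpe : Even p) (hqo : Odd q) (κ : ℝ) (r : ℕ → ℝ)
    (hr : ∃ C : ℝ, ∀ n : ℕ, 1 ≤ n → |r n| ≤ C / (n : ℝ)^2)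
    (μ : ℕ → ℕ → ℝ)
    (hμ : ∀ m n : ℕ, μ m n = ((n : ℝ)^2 + κ / Real.pi + r n) - ((q : ℝ) * m / p)^2) :
    ∀ A B : ℝ,
      {mn : ℕ × ℕ | Odd mn.1 ∧ 0 < mn.2 ∧ μ mn.1 mn.2 ∈ Set.Icc A B}.Finite := by
  intro A B
  obtain ⟨C, hC⟩ := hr
  set D : ℝ := max |A| |B| + |κ| / Real.pi + max C 0 with hDdef
  set N : ℕ := ⌈(p : ℝ)^2 * D⌉₊ with hNdef
  apply Set.Finite.subset (Set.finite_Icc ((0, 0) : ℕ × ℕ) (N, N))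
  rintro ⟨m, n⟩ ⟨hm, hn, hμA, hμB⟩
  have hπ : (0 : ℝ) < Real.pi := Real.pi_pos
  have hp' : (0 : ℝ) < (p : ℝ) := by exact_mod_cast hp
  -- bound on |r n|
  have hn1 : (1 : ℝ) ≤ (n : ℝ)^2 := by
    have : (1 : ℝ) ≤ (n : ℝ) := by exact_mod_cast hn
    nlinarith
  have hrn : |r n| ≤ max C 0 := by
    calc |r n| ≤ C / (n : ℝ)^2 := hC n hn
      _ ≤ max C 0 / (n : ℝ)^2 := by
          gcongr
          exact le_max_left _ _
      _ ≤ max C 0 := by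
          apply div_le_self (le_max_right _ _) hn1
  have hμabs : |μ m n| ≤ max |A| |B| := by
    rw [abs_le]
    constructor
    · calc -(max |A| |B|) ≤ -|A| := by simp [le_max_left]
        _ ≤ A := neg_abs_le A
        _ ≤ μ m n := hμA
    · exact le_trans hμB (le_trans (le_abs_self B) (le_max_right _ _))
  -- the main quantity
  have hkey : |(n : ℝ)^2 - ((q : ℝ) * m / p)^2| ≤ D := by
    have h1 : (n : ℝ)^2 - ((q : ℝ) * m / p)^2 = μ m n - κ / Real.pi - r n := by
      rw [hμ m n]; ring
    rw [h1]
    have habsκ : |κ / Real.pi| = |κ| / Real.pi := by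
      rw [abs_div, abs_of_pos hπ]
    calc |μ m n - κ / Real.pi - r n| ≤ |μ m n| + |κ / Real.pi| + |r n| := by
          have := abs_sub (μ m n - κ / Real.pi) (r n)
          have := abs_sub (μ m n) (κ / Real.pi)
          calc |μ m n - κ / Real.pi - r n| ≤ |μ m n - κ / Real.pi| + |r n| :=
                abs_sub (μ m n - κ / Real.pi) (r n)
            _ ≤ |μ m n| + |κ / Real.pi| + |r n| := by
                have := abs_sub (μ m n) (κ / Real.pi); linarith
      _ ≤ D := by rw [habsκ, hDdef]; linarith
  -- integer lower bound
  set X : ℤ := n * p with hX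
  set Y : ℤ := q * m with hY
  have hXeven : Even X := by
    obtain ⟨k, hk⟩ := hpe
    exact ⟨n * k, by rw [hX]; push_cast [hk]; ring⟩
  have hYodd : Odd Y := by
    have : Odd (q * m) := hqo.mul hm
    obtain ⟨k, hk⟩ := this
    exact ⟨k, by rw [hY]; exact_mod_cast hk⟩
  have hodd : Odd (X - Y) := hXeven.sub_odd hYodd
  have hne : X - Y ≠ 0 := by
    intro h; rw [h] at hodd; exact (Int.not_odd_iff_even.mpr Even.zero) hodd
  have h1le : (1 : ℤ) ≤ |X - Y| := Int.one_le_abs hne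
  have hXn : (n : ℤ) ≤ X := by
    rw [hX]
    nlinarith [Int.ofNat_le.mpr hp, Int.ofNat_le.mpr hn, Int.natCast_nonneg n]
  have hYm : (m : ℤ) ≤ Y := by
    have hm1 : 1 ≤ m := hm.pos
    rw [hY]
    nlinarith [Int.ofNat_le.mpr hq, Int.natCast_nonneg m, Int.ofNat_le.mpr hm1]
  have hXY0 : 0 ≤ X + Y := by positivity
  have hint : ((m : ℤ) + n) ≤ |X^2 - Y^2| := by
    have : X^2 - Y^2 = (X - Y) * (X + Y) := by ring
    rw [this, abs_mul, abs_of_nonneg hXY0]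
    nlinarith
  -- transfer to ℝ
  have hcast : ((n : ℝ)^2 - ((q : ℝ) * m / p)^2) = ((X : ℝ)^2 - (Y : ℝ)^2) / (p : ℝ)^2 := by
    rw [hX, hY]
    field_simp
    push_cast
    ring
  have hreal : ((m : ℝ) + n) ≤ (p : ℝ)^2 * D := by
    have h2 : |(X : ℝ)^2 - (Y : ℝ)^2| ≤ (p : ℝ)^2 * D := by
      have : |(X : ℝ)^2 - (Y : ℝ)^2| = (p : ℝ)^2 * |(n : ℝ)^2 - ((q : ℝ) * m / p)^2| := by
        rw [hcast, abs_div, abs_of_pos (by positivity : (0:ℝ) < (p:ℝ)^2)]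
        field_simp
      rw [this]
      exact mul_le_mul_of_nonneg_left hkey (by positivity)
    have h3 : ((m : ℝ) + n) ≤ |(X : ℝ)^2 - (Y : ℝ)^2| := by
      have h6 : ((m + n : ℤ) : ℝ) ≤ ((|X^2 - Y^2| : ℤ) : ℝ) := by exact_mod_cast hint
      push_cast at h6
      convert h6 using 2
    linarith
  -- conclude membership
  have hmN : m ≤ N := by
    have h4 : (m : ℝ) ≤ (N : ℝ) := by
      have h5 : (m : ℝ) ≤ (p : ℝ)^2 * D := by
        linarith [hreal, (Nat.cast_nonneg n : (0:ℝ) ≤ (n:ℝ))]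
      exact le_trans h5 (Nat.le_ceil _)
    exact_mod_cast h4
  have hnN : n ≤ N := by
    have h4 : (n : ℝ) ≤ (N : ℝ) := by
      have h5 : (n : ℝ) ≤ (p : ℝ)^2 * D := by
        linarith [hreal, (Nat.cast_nonneg m : (0:ℝ) ≤ (m:ℝ))]
      exact le_trans h5 (Nat.le_ceil _)
    exact_mod_cast h4
  simp only [Set.mem_Icc, Prod.le_def]
  exact ⟨⟨Nat.zero_le _, Nat.zero_le _⟩, hmN, hnN⟩
end
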